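/- Let L be a symmetric zero-diagonal interaction matrix with ‖|L|‖_2 < 1 and let M = (1+ε)L for ε > 0. Then for any a-Lipschitz function f on Ω = {-1,+1}^n, |E_{π_L} f − E_{π_M} f| ≤ ε ‖a‖_2 √n ‖L‖_2 / (2(1 − ‖|L|‖_2)). -/

import Mathlib

open Finset
open scoped Matrix

/-- Spin value ±1 of a Boolean coordinate. -/
noncomputable def spin (b : Bool) : ℝ := if b then 1 else -1

/-- Configuration `x` with coordinate `i` set to `+1`. -/
noncomputable def up {n : ℕ} (x : Fin n → Bool) (i : Fin n) : Fin n → Bool :=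
  Function.update x i true

/-- Configuration `x` with coordinate `i` set to `-1`. -/
noncomputable def dn {n : ℕ} (x : Fin n → Bool) (i : Fin n) : Fin n → Bool :=
  Function.update x i false

/-- Conditional probability `μ_i(1 | x^{(∼i)})`. -/
noncomputable def condProb {n : ℕ} (μ : (Fin n → Bool) → ℝ) (x : Fin n → Bool) (i : Fin n) : ℝ :=
  μ (up x i) / (μ (up x i) + μ (dn x i))

/-- Glauber dynamics kernel of `μ`, acting on functions. -/
noncomputable def glauberOp {n : ℕ} (μ : (Fin n → Bool) → ℝ) (h : (Fin n → Bool) → ℝ)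
    (x : Fin n → Bool) : ℝ :=
  (1 / n) * ∑ i, (condProb μ x i * h (up x i) + (1 - condProb μ x i) * h (dn x i))

/-- Discrete derivative `Δ_i(h)(x) = h(x^{(i,+)}) - h(x^{(i,-)})`. -/
noncomputable def disc {n : ℕ} (i : Fin n) (h : (Fin n → Bool) → ℝ) (x : Fin n → Bool) : ℝ :=
  h (up x i) - h (dn x i)

/-- The ±1 spin vector associated to a Boolean configuration. -/
noncomputable def sigmaVec {n : ℕ} (x : Fin n → Bool) : Fin n → ℝ := fun i => spin (x i)

/-- The Ising model with interaction matrix `J`: `π_J(x) ∝ exp((1/2) xᵀ J x)`. -/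
noncomputable def ising {n : ℕ} (J : Matrix (Fin n) (Fin n) ℝ) (x : Fin n → Bool) : ℝ :=
  Real.exp ((1 / 2) * (sigmaVec x ⬝ᵥ J.mulVec (sigmaVec x))) /
    ∑ y, Real.exp ((1 / 2) * (sigmaVec y ⬝ᵥ J.mulVec (sigmaVec y)))

/-- Spectral (ℓ²-operator) norm of a real square matrix. -/
noncomputable def specNorm {n : ℕ} (M : Matrix (Fin n) (Fin n) ℝ) : ℝ :=
  ‖(Matrix.toEuclideanCLM (𝕜 := ℝ) M : EuclideanSpace ℝ (Fin n) →L[ℝ] EuclideanSpace ℝ (Fin n))‖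

/-- Expectation of `f` under the probability mass function `μ`. -/
noncomputable def expect {n : ℕ} (μ : (Fin n → Bool) → ℝ) (f : (Fin n → Bool) → ℝ) : ℝ :=
  ∑ x, μ x * f x

/-- Entrywise absolute value of a matrix. -/
noncomputable def absMat {n : ℕ} (L : Matrix (Fin n) (Fin n) ℝ) : Matrix (Fin n) (Fin n) ℝ :=
  Matrix.of fun i j => |L i j|

/-!
Let `P` and `Q` be the Glauber dynamics of `π_L` and of `π_M`, `M = (1 + ε) L`. A site-`i` update
only sees the local field `(L σ)_i` through the logistic function, which is `1/4`-Lipschitz. Hence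
(Dobrushin) one step of `P` maps discrete gradients bounded by `b` to gradients bounded by `A b`,
`A = (1 - 1/n) I + (1/n) |L|`, with `‖A‖₂ ≤ 1 - (1 - ‖|L|‖₂)/n`; and `P` and `Q` differ on such a
function by at most `(ε / 2n) Σ_i |(L σ)_i| b_i ≤ (ε / 2n) ‖L‖₂ √n ‖b‖₂`. Since `π_L` is
`P`-invariant and `π_M` is `Q`-invariant, `E_L f - E_M f` telescopes along `P^k f` into these
one-step differences plus the oscillation of `P^K f`, which vanishes as `K → ∞`; summing the
geometric series in `‖A‖₂` gives the bound.
-/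

namespace Real

lemma abs_sigmoid_sub_le (s t : ℝ) : |sigmoid s - sigmoid t| ≤ |s - t| / 4 := by
  have hderiv : ∀ x ∈ Set.univ, ‖deriv sigmoid x‖ ≤ 4⁻¹ := fun x _ => by
    rw [deriv_sigmoid, norm_mul, Real.norm_of_nonneg (sigmoid_nonneg x),
      Real.norm_of_nonneg (sub_nonneg.2 (sigmoid_le_one x))]
    nlinarith [sq_nonneg (sigmoid x - 2⁻¹)]
  have := convex_univ.norm_image_sub_le_of_norm_deriv_le
    (fun x _ => differentiableAt_sigmoid) hderiv (Set.mem_univ t) (Set.mem_univ s)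
  rw [Real.norm_eq_abs, Real.norm_eq_abs] at this
  linarith

lemma exp_div_exp_add_exp (s t : ℝ) : exp s / (exp s + exp t) = sigmoid (s - t) := by
  rw [sigmoid_def, neg_sub, exp_sub]
  field_simp

end Real

section Flips

variable {n : ℕ}

@[simp] lemma up_apply_self (x : Fin n → Bool) (i : Fin n) : up x i i = true := by simp [up]
@[simp] lemma dn_apply_self (x : Fin n → Bool) (i : Fin n) : dn x i i = false := by simp [dn]

lemma up_apply_of_ne (x : Fin n → Bool) {i j : Fin n} (h : j ≠ i) : up x i j = x j :=
  Function.update_of_ne h _ _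

lemma dn_apply_of_ne (x : Fin n → Bool) {i j : Fin n} (h : j ≠ i) : dn x i j = x j :=
  Function.update_of_ne h _ _

@[simp] lemma up_up (x : Fin n → Bool) (i : Fin n) : up (up x i) i = up x i := by
  simp [up]
@[simp] lemma dn_up (x : Fin n → Bool) (i : Fin n) : dn (up x i) i = dn x i := by
  simp [up, dn]
@[simp] lemma up_dn (x : Fin n → Bool) (i : Fin n) : up (dn x i) i = up x i := by
  simp [up, dn]
@[simp] lemma dn_dn (x : Fin n → Bool) (i : Fin n) : dn (dn x i) i = dn x i := by
  simp [dn]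

lemma up_up_comm (x : Fin n → Bool) {i j : Fin n} (h : i ≠ j) :
    up (up x j) i = up (up x i) j := Function.update_comm h.symm _ _ _
lemma up_dn_comm (x : Fin n → Bool) {i j : Fin n} (h : i ≠ j) :
    up (dn x j) i = dn (up x i) j := Function.update_comm h.symm _ _ _
lemma dn_up_comm (x : Fin n → Bool) {i j : Fin n} (h : i ≠ j) :
    dn (up x j) i = up (dn x i) j := Function.update_comm h.symm _ _ _
lemma dn_dn_comm (x : Fin n → Bool) {i j : Fin n} (h : i ≠ j) :
    dn (dn x j) i = dn (dn x i) j := Function.update_comm h.symm _ _ _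

lemma up_eq_self {x : Fin n → Bool} {i : Fin n} (h : x i = true) : up x i = x := by
  rw [up, ← h, Function.update_eq_self]

lemma dn_eq_self {x : Fin n → Bool} {i : Fin n} (h : x i = false) : dn x i = x := by
  rw [dn, ← h, Function.update_eq_self]

@[simp] lemma condProb_up (μ : (Fin n → Bool) → ℝ) (x : Fin n → Bool) (i : Fin n) :
    condProb μ (up x i) i = condProb μ x i := by simp [condProb]
@[simp] lemma condProb_dn (μ : (Fin n → Bool) → ℝ) (x : Fin n → Bool) (i : Fin n) :
    condProb μ (dn x i) i = condProb μ x i := by simp [condProb]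

lemma sum_up_add_dn (φ : (Fin n → Bool) → ℝ) (i : Fin n) :
    ∑ x, (φ (up x i) + φ (dn x i)) = 2 * ∑ x, φ x := by
  have hpair : ∀ x, φ (up x i) + φ (dn x i) = φ x + φ (Function.update x i !(x i)) := by
    intro x
    cases h : x i
    · rw [dn_eq_self h, add_comm]; rfl
    · rw [up_eq_self h]; rfl
  let flip : Equiv.Perm (Fin n → Bool) :=
    Function.Involutive.toPerm (fun x => Function.update x i !(x i)) fun x => by simp
  rw [Finset.sum_congr rfl fun x _ => hpair x, Finset.sum_add_distrib, two_mul]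
  exact congrArg _ (Equiv.sum_comp flip φ)

end Flips

section SpecNorm

variable {n : ℕ}

lemma specNorm_nonneg (M : Matrix (Fin n) (Fin n) ℝ) : 0 ≤ specNorm M := norm_nonneg _

lemma specNorm_add_le (M N : Matrix (Fin n) (Fin n) ℝ) :
    specNorm (M + N) ≤ specNorm M + specNorm N := by
  simp only [specNorm, map_add]
  exact norm_add_le _ _

lemma specNorm_smul (c : ℝ) (M : Matrix (Fin n) (Fin n) ℝ) :
    specNorm (c • M) = |c| * specNorm M := by
  simp only [specNorm, map_smul]
  exact norm_smul c _

lemma specNorm_one_le : specNorm (1 : Matrix (Fin n) (Fin n) ℝ) ≤ 1 := by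
  simp only [specNorm, map_one]
  exact ContinuousLinearMap.norm_id_le

lemma sqrt_sum_mulVec_sq_le (M : Matrix (Fin n) (Fin n) ℝ) (v : Fin n → ℝ) :
    √(∑ i, (M *ᵥ v) i ^ 2) ≤ specNorm M * √(∑ i, v i ^ 2) := by
  have hnorm : ∀ w : Fin n → ℝ, ‖WithLp.toLp 2 w‖ = √(∑ i, w i ^ 2) := fun w => by
    simp [EuclideanSpace.norm_eq]
  rw [← hnorm, ← hnorm, ← Matrix.toEuclideanCLM_toLp]
  exact ContinuousLinearMap.le_opNorm _ _

lemma sqrt_sum_iterate_mulVec_sq_le (M : Matrix (Fin n) (Fin n) ℝ) (v : Fin n → ℝ)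
    (k : ℕ) : √(∑ i, ((M *ᵥ ·)^[k] v) i ^ 2) ≤ specNorm M ^ k * √(∑ i, v i ^ 2) := by
  induction k with
  | zero => simp
  | succ k ih =>
    rw [Function.iterate_succ_apply', pow_succ', mul_assoc]
    exact (sqrt_sum_mulVec_sq_le M _).trans (by gcongr; exact specNorm_nonneg M)

lemma sum_le_sqrt_mul_sqrt_sum_sq (v : Fin n → ℝ) : ∑ i, v i ≤ √n * √(∑ i, v i ^ 2) := by
  simpa using Real.sum_mul_le_sqrt_mul_sqrt Finset.univ (fun _ => 1) v

end SpecNorm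

lemma le_div_one_sub_of_forall_le_pow_add_geom {X c d θ : ℝ} (hθ0 : 0 ≤ θ) (hθ1 : θ < 1)
    (hd : 0 ≤ d) (h : ∀ K : ℕ, X ≤ c * θ ^ K + d * ∑ k ∈ Finset.range K, θ ^ k) :
    X ≤ d / (1 - θ) := by
  have hbound : ∀ K : ℕ, X ≤ c * θ ^ K + d / (1 - θ) := fun K => by
    have hgeom : ∑ k ∈ Finset.range K, θ ^ k ≤ 1 / (1 - θ) := by
      have := geom_sum_Ico_le_of_lt_one (m := 0) (n := K) hθ0 hθ1
      rwa [← Finset.range_eq_Ico, pow_zero] at this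
    calc X ≤ c * θ ^ K + d * (1 / (1 - θ)) := (h K).trans (by gcongr)
      _ = c * θ ^ K + d / (1 - θ) := by ring
  have hlim : Filter.Tendsto (fun K : ℕ => c * θ ^ K + d / (1 - θ)) Filter.atTop
      (nhds (d / (1 - θ))) := by
    simpa using ((tendsto_pow_atTop_nhds_zero_of_lt_one hθ0 hθ1).const_mul c).add_const
      (d / (1 - θ))
  exact ge_of_tendsto' hlim hbound

section Ising

variable {n : ℕ}

lemma sigmaVec_up (x : Fin n → Bool) (i : Fin n) :
    sigmaVec (up x i) = Function.update (sigmaVec x) i 1 := by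
  ext j
  by_cases h : j = i
  · subst h; simp [sigmaVec, spin]
  · simp [sigmaVec, up_apply_of_ne x h, h]

lemma sigmaVec_dn (x : Fin n → Bool) (i : Fin n) :
    sigmaVec (dn x i) = Function.update (sigmaVec x) i (-1) := by
  ext j
  by_cases h : j = i
  · subst h; simp [sigmaVec, spin]
  · simp [sigmaVec, dn_apply_of_ne x h, h]

lemma sigmaVec_up_sub_sigmaVec_dn (x : Fin n → Bool) (i : Fin n) :
    sigmaVec (up x i) - sigmaVec (dn x i) = Pi.single i 2 := by
  ext j
  by_cases h : j = i
  · subst h; norm_num [sigmaVec_up, sigmaVec_dn]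
  · simp [sigmaVec_up, sigmaVec_dn, h]

lemma sum_sigmaVec_sq (x : Fin n → Bool) : ∑ i, sigmaVec x i ^ 2 = n := by
  have h : ∀ i, sigmaVec x i ^ 2 = 1 := fun i => by
    cases x i <;> norm_num [sigmaVec, spin, *]
  simp [h]

lemma dotProduct_mulVec_sub_of_eq_off {J : Matrix (Fin n) (Fin n) ℝ} (hJ : J.IsSymm)
    {u v : Fin n → ℝ} {i : Fin n} (huv : ∀ j, j ≠ i → u j = v j) :
    u ⬝ᵥ J *ᵥ u - v ⬝ᵥ J *ᵥ v = (u i - v i) * ((J *ᵥ u) i + (J *ᵥ v) i) := by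
  have hsub : u - v = Pi.single i (u i - v i) := by
    ext j
    by_cases h : j = i
    · subst h; simp
    · simp [h, huv j h]
  have hcomm : v ⬝ᵥ J *ᵥ u = u ⬝ᵥ J *ᵥ v := by
    rw [Matrix.dotProduct_mulVec, ← hJ.eq, Matrix.vecMul_transpose, dotProduct_comm, hJ.eq]
  calc u ⬝ᵥ J *ᵥ u - v ⬝ᵥ J *ᵥ v = (u - v) ⬝ᵥ J *ᵥ u + (u - v) ⬝ᵥ J *ᵥ v := by
        rw [sub_dotProduct, sub_dotProduct, hcomm]; ring
    _ = _ := by rw [hsub]; simp [single_dotProduct]; ring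

lemma mulVec_apply_eq_of_eq_off {J : Matrix (Fin n) (Fin n) ℝ} (hJ : ∀ i, J i i = 0)
    {u v : Fin n → ℝ} {i : Fin n} (huv : ∀ j, j ≠ i → u j = v j) :
    (J *ᵥ u) i = (J *ᵥ v) i := by
  simp only [Matrix.mulVec, dotProduct]
  refine Finset.sum_congr rfl fun j _ => ?_
  by_cases h : j = i
  · subst h; simp [hJ]
  · rw [huv j h]

lemma mulVec_sigmaVec_up_apply {J : Matrix (Fin n) (Fin n) ℝ} (hJ : ∀ i, J i i = 0)
    (x : Fin n → Bool) (i : Fin n) :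
    (J *ᵥ sigmaVec (up x i)) i = (J *ᵥ sigmaVec x) i :=
  mulVec_apply_eq_of_eq_off hJ fun j h => by simp [sigmaVec_up, h]

lemma mulVec_sigmaVec_dn_apply {J : Matrix (Fin n) (Fin n) ℝ} (hJ : ∀ i, J i i = 0)
    (x : Fin n → Bool) (i : Fin n) :
    (J *ᵥ sigmaVec (dn x i)) i = (J *ᵥ sigmaVec x) i :=
  mulVec_apply_eq_of_eq_off hJ fun j h => by simp [sigmaVec_dn, h]

lemma sum_exp_energy_pos (J : Matrix (Fin n) (Fin n) ℝ) :
    0 < ∑ y : Fin n → Bool, Real.exp (1 / 2 * (sigmaVec y ⬝ᵥ J *ᵥ sigmaVec y)) :=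
  Finset.sum_pos (fun _ _ => Real.exp_pos _) Finset.univ_nonempty

lemma ising_pos (J : Matrix (Fin n) (Fin n) ℝ) (x : Fin n → Bool) : 0 < ising J x :=
  div_pos (Real.exp_pos _) (sum_exp_energy_pos J)

lemma sum_ising (J : Matrix (Fin n) (Fin n) ℝ) : ∑ x, ising J x = 1 := by
  simp only [ising, ← Finset.sum_div]
  exact div_self (sum_exp_energy_pos J).ne'

lemma condProb_ising {J : Matrix (Fin n) (Fin n) ℝ} (hJs : J.IsSymm) (hJd : ∀ i, J i i = 0)
    (x : Fin n → Bool) (i : Fin n) :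
    condProb (ising J) x i = Real.sigmoid (2 * (J *ᵥ sigmaVec x) i) := by
  set E : (Fin n → Bool) → ℝ := fun y => 1 / 2 * (sigmaVec y ⬝ᵥ J *ᵥ sigmaVec y)
  have hZ : (∑ y, Real.exp (E y)) ≠ 0 := (sum_exp_energy_pos J).ne'
  have hE : E (up x i) - E (dn x i) = 2 * (J *ᵥ sigmaVec x) i := by
    simp only [E, ← mul_sub]
    rw [dotProduct_mulVec_sub_of_eq_off hJs (i := i)
        fun j h => by simp [sigmaVec_up, sigmaVec_dn, h],
      mulVec_sigmaVec_up_apply hJd, mulVec_sigmaVec_dn_apply hJd]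
    simp [sigmaVec_up, sigmaVec_dn]; ring
  rw [condProb, ising, ising, ← add_div, div_div_div_cancel_right₀ hZ]
  exact (Real.exp_div_exp_add_exp _ _).trans (congrArg _ hE)

lemma abs_condProb_ising_sub_le {J K : Matrix (Fin n) (Fin n) ℝ}
    (hJs : J.IsSymm) (hJd : ∀ i, J i i = 0) (hKs : K.IsSymm) (hKd : ∀ i, K i i = 0)
    (x y : Fin n → Bool) (i : Fin n) :
    |condProb (ising J) x i - condProb (ising K) y i|
      ≤ |(J *ᵥ sigmaVec x) i - (K *ᵥ sigmaVec y) i| / 2 := by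
  rw [condProb_ising hJs hJd, condProb_ising hKs hKd]
  refine (Real.abs_sigmoid_sub_le _ _).trans_eq ?_
  rw [← mul_sub, abs_mul, abs_two]; ring

lemma abs_condProb_ising_up_sub_dn_le {J : Matrix (Fin n) (Fin n) ℝ}
    (hJs : J.IsSymm) (hJd : ∀ i, J i i = 0) (x : Fin n → Bool) (i j : Fin n) :
    |condProb (ising J) (up x j) i - condProb (ising J) (dn x j) i| ≤ |J i j| := by
  refine (abs_condProb_ising_sub_le hJs hJd hJs hJd _ _ i).trans_eq ?_
  rw [← Pi.sub_apply, ← Matrix.mulVec_sub, sigmaVec_up_sub_sigmaVec_dn]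
  simp [abs_mul]

lemma abs_condProb_ising_sub_smul_le {L : Matrix (Fin n) (Fin n) ℝ}
    (hLs : L.IsSymm) (hLd : ∀ i, L i i = 0) {ε : ℝ} (hε : 0 < ε) (x : Fin n → Bool) (i : Fin n) :
    |condProb (ising L) x i - condProb (ising ((1 + ε) • L)) x i|
      ≤ ε / 2 * |(L *ᵥ sigmaVec x) i| := by
  have hMs : ((1 + ε) • L).IsSymm := hLs.smul _
  refine (abs_condProb_ising_sub_le hLs hLd hMs (by simp [hLd]) x x i).trans_eq ?_
  rw [Matrix.smul_mulVec, Pi.smul_apply, smul_eq_mul, ← one_sub_mul, abs_mul]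
  rw [show (1 : ℝ) - (1 + ε) = -ε by ring, abs_neg, abs_of_pos hε]; ring

end Ising

section Oscillation

variable {n : ℕ}

lemma abs_sub_update_le {g : (Fin n → Bool) → ℝ} {b : Fin n → ℝ}
    (hg : ∀ x i, |disc i g x| ≤ b i) (x : Fin n → Bool) (i : Fin n) (c : Bool) :
    |g x - g (Function.update x i c)| ≤ b i := by
  have hb : 0 ≤ b i := (abs_nonneg _).trans (hg x i)
  have hdisc : |g (up x i) - g (dn x i)| ≤ b i := hg x i
  rw [← Function.update_eq_self i x]
  simp only [Function.update_idem]
  cases x i <;> cases c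
  · simpa using hb
  · rwa [abs_sub_comm]
  · exact hdisc
  · simpa using hb

lemma abs_sub_le_sum_of_abs_disc_le {g : (Fin n → Bool) → ℝ} {b : Fin n → ℝ}
    (hg : ∀ x i, |disc i g x| ≤ b i) (x y : Fin n → Bool) : |g x - g y| ≤ ∑ i, b i := by
  let z : Finset (Fin n) → Fin n → Bool := fun s j => if j ∈ s then y j else x j
  have hz : ∀ s, |g x - g (z s)| ≤ ∑ i ∈ s, b i := by
    intro s
    induction s using Finset.induction_on with
    | empty => simp [z]
    | insert i s hi ih =>
      have hstep : z (insert i s) = Function.update (z s) i (y i) := by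
        ext j
        by_cases h : j = i
        · subst h; simp [z]
        · simp [z, h]
      rw [hstep, Finset.sum_insert hi]
      calc |g x - g (Function.update (z s) i (y i))|
          ≤ |g x - g (z s)| + |g (z s) - g (Function.update (z s) i (y i))| := abs_sub_le _ _ _
        _ ≤ ∑ i ∈ s, b i + b i := add_le_add ih (abs_sub_update_le hg _ i _)
        _ = b i + ∑ i ∈ s, b i := add_comm _ _
  simpa [z] using hz Finset.univ

lemma abs_disc_le_of_abs_sub_le {f : (Fin n → Bool) → ℝ} {a : Fin n → ℝ}
    (hf : ∀ x y, |f x - f y| ≤ ∑ i, if x i = y i then 0 else a i) (x : Fin n → Bool)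
    (i : Fin n) : |disc i f x| ≤ a i := by
  refine (hf _ _).trans_eq ?_
  rw [Finset.sum_eq_single_of_mem i (Finset.mem_univ i) fun j _ hj => ?_]
  · simp
  · simp [up_apply_of_ne x hj, dn_apply_of_ne x hj]

end Oscillation

section Expectation

variable {n : ℕ}

lemma expect_sub (μ g h : (Fin n → Bool) → ℝ) :
    expect μ (fun x => g x - h x) = expect μ g - expect μ h := by
  simp only [_root_.expect, mul_sub, Finset.sum_sub_distrib]

lemma expect_const {μ : (Fin n → Bool) → ℝ} (hμ : ∑ x, μ x = 1) (c : ℝ) :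
    expect μ (fun _ => c) = c := by
  simp only [_root_.expect, ← Finset.sum_mul, hμ, one_mul]

lemma abs_expect_le {μ : (Fin n → Bool) → ℝ} (hμ0 : ∀ x, 0 ≤ μ x) (hμ1 : ∑ x, μ x = 1)
    {g : (Fin n → Bool) → ℝ} {C : ℝ} (hg : ∀ x, |g x| ≤ C) : |expect μ g| ≤ C := by
  calc |expect μ g| ≤ ∑ x, μ x * |g x| := by
        refine (Finset.abs_sum_le_sum_abs _ _).trans_eq (Finset.sum_congr rfl fun x _ => ?_)
        rw [abs_mul, abs_of_nonneg (hμ0 x)]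
    _ ≤ expect μ (fun _ => C) := Finset.sum_le_sum fun x _ => by gcongr; exacts [hμ0 x, hg x]
    _ = C := expect_const hμ1 C

lemma abs_expect_sub_expect_le {μ ν : (Fin n → Bool) → ℝ}
    (hμ0 : ∀ x, 0 ≤ μ x) (hμ1 : ∑ x, μ x = 1) (hν0 : ∀ x, 0 ≤ ν x) (hν1 : ∑ x, ν x = 1)
    {g : (Fin n → Bool) → ℝ} {C : ℝ} (hg : ∀ x y, |g x - g y| ≤ C) :
    |expect μ g - expect ν g| ≤ C := by
  rw [← expect_const hμ1 (expect ν g), ← expect_sub]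
  refine abs_expect_le hμ0 hμ1 fun x => ?_
  rw [← expect_const hν1 (g x), ← expect_sub]
  exact abs_expect_le hν0 hν1 (hg x)

lemma abs_expect_sub_expect_le_of_iterate {μ ν : (Fin n → Bool) → ℝ}
    (hν0 : ∀ x, 0 ≤ ν x) (hν1 : ∑ x, ν x = 1)
    {P Q : ((Fin n → Bool) → ℝ) → (Fin n → Bool) → ℝ}
    (hP : ∀ g, expect μ (P g) = expect μ g) (hQ : ∀ g, expect ν (Q g) = expect ν g)
    (f : (Fin n → Bool) → ℝ) {c : ℕ → ℝ} (hc : ∀ k x, |P (P^[k] f) x - Q (P^[k] f) x| ≤ c k)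
    (K : ℕ) : |expect μ f - expect ν f|
      ≤ |expect μ (P^[K] f) - expect ν (P^[K] f)| + ∑ k ∈ Finset.range K, c k := by
  induction K with
  | zero => simp
  | succ K ih =>
    have hstep : expect μ (P^[K + 1] f) - expect ν (P^[K + 1] f)
        = (expect μ (P^[K] f) - expect ν (P^[K] f))
          - expect ν (fun x => P (P^[K] f) x - Q (P^[K] f) x) := by
      rw [Function.iterate_succ_apply', expect_sub, hP, hQ]; ring
    have hdiff := abs_expect_le hν0 hν1 (hc K)
    rw [Finset.sum_range_succ, hstep]
    refine ih.trans ?_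
    linarith [abs_sub_abs_le_abs_sub (expect μ (P^[K] f) - expect ν (P^[K] f))
      (expect ν fun x => P (P^[K] f) x - Q (P^[K] f) x)]

end Expectation

section Glauber

variable {n : ℕ}

noncomputable def heatBath (μ : (Fin n → Bool) → ℝ) (i : Fin n) (h : (Fin n → Bool) → ℝ)
    (x : Fin n → Bool) : ℝ :=
  condProb μ x i * h (up x i) + (1 - condProb μ x i) * h (dn x i)

lemma glauberOp_eq_sum_heatBath (μ : (Fin n → Bool) → ℝ) (h : (Fin n → Bool) → ℝ)
    (x : Fin n → Bool) : glauberOp μ h x = 1 / n * ∑ i, heatBath μ i h x := rfl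

@[simp] lemma heatBath_up (μ : (Fin n → Bool) → ℝ) (i : Fin n) (h : (Fin n → Bool) → ℝ)
    (x : Fin n → Bool) : heatBath μ i h (up x i) = heatBath μ i h x := by
  simp [heatBath]

@[simp] lemma heatBath_dn (μ : (Fin n → Bool) → ℝ) (i : Fin n) (h : (Fin n → Bool) → ℝ)
    (x : Fin n → Bool) : heatBath μ i h (dn x i) = heatBath μ i h x := by
  simp [heatBath]

lemma sum_mul_heatBath {μ : (Fin n → Bool) → ℝ} (hμ : ∀ x, 0 < μ x) (i : Fin n)
    (h : (Fin n → Bool) → ℝ) : ∑ x, μ x * heatBath μ i h x = ∑ x, μ x * h x := by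
  have hpair : ∀ x, μ (up x i) * heatBath μ i h (up x i) + μ (dn x i) * heatBath μ i h (dn x i)
      = μ (up x i) * h (up x i) + μ (dn x i) * h (dn x i) := fun x => by
    have := hμ (up x i); have := hμ (dn x i)
    rw [heatBath_up, heatBath_dn]
    simp only [heatBath, condProb]
    field_simp
    ring
  have h2 := sum_up_add_dn (fun x => μ x * heatBath μ i h x) i
  rw [Finset.sum_congr rfl fun x _ => hpair x, sum_up_add_dn (fun x => μ x * h x) i] at h2
  linarith

lemma expect_glauberOp (hn : 0 < n) {μ : (Fin n → Bool) → ℝ} (hμ : ∀ x, 0 < μ x)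
    (h : (Fin n → Bool) → ℝ) : expect μ (glauberOp μ h) = expect μ h := by
  have hn' : (n : ℝ) ≠ 0 := by positivity
  simp only [_root_.expect, glauberOp_eq_sum_heatBath, Finset.mul_sum]
  rw [Finset.sum_comm]
  simp only [mul_left_comm (μ _), ← Finset.mul_sum, sum_mul_heatBath hμ]
  simp [Finset.mul_sum, hn']

lemma condProb_nonneg {μ : (Fin n → Bool) → ℝ} (hμ : ∀ x, 0 < μ x) (x : Fin n → Bool)
    (i : Fin n) : 0 ≤ condProb μ x i :=
  div_nonneg (hμ _).le (add_pos (hμ _) (hμ _)).le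

lemma condProb_le_one {μ : (Fin n → Bool) → ℝ} (hμ : ∀ x, 0 < μ x) (x : Fin n → Bool)
    (i : Fin n) : condProb μ x i ≤ 1 :=
  (div_le_one (add_pos (hμ _) (hμ _))).2 (le_add_of_nonneg_right (hμ _).le)

lemma disc_heatBath_self (μ : (Fin n → Bool) → ℝ) (i : Fin n) (g : (Fin n → Bool) → ℝ)
    (x : Fin n → Bool) : disc i (heatBath μ i g) x = 0 := by
  simp [disc]

lemma abs_disc_heatBath_le {μ : (Fin n → Bool) → ℝ} (hμ : ∀ x, 0 < μ x)
    {g : (Fin n → Bool) → ℝ} {b : Fin n → ℝ} (hg : ∀ x i, |disc i g x| ≤ b i)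
    (x : Fin n → Bool) {i j : Fin n} (hij : i ≠ j) :
    |disc j (heatBath μ i g) x|
      ≤ b j + |condProb μ (up x j) i - condProb μ (dn x j) i| * b i := by
  set p := condProb μ (up x j) i
  set q := condProb μ (dn x j) i
  have hp0 := condProb_nonneg hμ (up x j) i
  have hp1 := condProb_le_one hμ (up x j) i
  have hsplit : disc j (heatBath μ i g) x
      = p * disc j g (up x i) + (1 - p) * disc j g (dn x i) + (p - q) * disc i g (dn x j) := by
    simp only [disc, heatBath, up_up_comm x hij, up_dn_comm x hij, dn_up_comm x hij,
      dn_dn_comm x hij, p, q]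
    ring
  rw [hsplit]
  calc _ ≤ p * b j + (1 - p) * b j + |p - q| * b i := by
        refine (abs_add_three _ _ _).trans (add_le_add_three ?_ ?_ ?_) <;> rw [abs_mul]
        · rw [abs_of_nonneg hp0]; exact mul_le_mul_of_nonneg_left (hg _ j) hp0
        · rw [abs_of_nonneg (sub_nonneg.2 hp1)]
          exact mul_le_mul_of_nonneg_left (hg _ j) (sub_nonneg.2 hp1)
        · exact mul_le_mul_of_nonneg_left (hg _ i) (abs_nonneg _)
    _ = b j + |p - q| * b i := by ring

lemma disc_glauberOp (μ : (Fin n → Bool) → ℝ) (g : (Fin n → Bool) → ℝ) (x : Fin n → Bool)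
    (j : Fin n) : disc j (glauberOp μ g) x = 1 / n * ∑ i, disc j (heatBath μ i g) x := by
  simp only [disc, glauberOp_eq_sum_heatBath, ← mul_sub, ← Finset.sum_sub_distrib]

lemma abs_disc_glauberOp_le {μ : (Fin n → Bool) → ℝ} (hμ : ∀ x, 0 < μ x)
    {C : Matrix (Fin n) (Fin n) ℝ}
    (hC : ∀ x i j, |condProb μ (up x j) i - condProb μ (dn x j) i| ≤ C i j)
    {g : (Fin n → Bool) → ℝ} {b : Fin n → ℝ} (hg : ∀ x i, |disc i g x| ≤ b i)
    (x : Fin n → Bool) (j : Fin n) :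
    |disc j (glauberOp μ g) x| ≤ (1 - 1 / n) * b j + 1 / n * ∑ i, C i j * b i := by
  have hb : ∀ i, 0 ≤ b i := fun i => (abs_nonneg _).trans (hg x i)
  have hterm : ∀ i,
      |disc j (heatBath μ i g) x| ≤ b j - (if i = j then b j else 0) + C i j * b i := by
    intro i
    by_cases hij : i = j
    · subst hij
      simpa [disc_heatBath_self] using
        mul_nonneg ((abs_nonneg _).trans (hC x i i)) (hb i)
    · simpa [hij] using (abs_disc_heatBath_le hμ hg x hij).trans
        (by gcongr; exacts [hb i, hC x i j])
  have hn : (n : ℝ) ≠ 0 := by have := j.pos; positivity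
  rw [disc_glauberOp, abs_mul, abs_of_nonneg (by positivity)]
  calc 1 / n * |∑ i, disc j (heatBath μ i g) x|
      ≤ 1 / n * ∑ i, (b j - (if i = j then b j else 0) + C i j * b i) := by
        gcongr
        exact (Finset.abs_sum_le_sum_abs _ _).trans (Finset.sum_le_sum fun i _ => hterm i)
    _ = (1 - 1 / n) * b j + 1 / n * ∑ i, C i j * b i := by
        simp only [Finset.sum_add_distrib, Finset.sum_sub_distrib, Finset.sum_ite_eq',
          Finset.mem_univ, if_true, Finset.sum_const, Finset.card_univ, Fintype.card_fin,
          nsmul_eq_mul]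
        field_simp

/-- Dobrushin's matrix for one Glauber step with influence matrix `C`: the step resamples a given
site only with probability `1/n`. -/
noncomputable def dobrushinStep (n : ℕ) (C : Matrix (Fin n) (Fin n) ℝ) :
    Matrix (Fin n) (Fin n) ℝ :=
  (1 - 1 / n : ℝ) • 1 + (1 / n : ℝ) • C

lemma dobrushinStep_mulVec_apply (C : Matrix (Fin n) (Fin n) ℝ) (b : Fin n → ℝ) (j : Fin n) :
    (dobrushinStep n C *ᵥ b) j = (1 - 1 / n) * b j + 1 / n * (C *ᵥ b) j := by
  simp [dobrushinStep, Matrix.add_mulVec, Matrix.smul_mulVec]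

lemma specNorm_dobrushinStep_le (hn : 0 < n) (C : Matrix (Fin n) (Fin n) ℝ) :
    specNorm (dobrushinStep n C) ≤ 1 - (1 - specNorm C) / n := by
  have h1 : (0 : ℝ) ≤ 1 - 1 / n := by
    rw [sub_nonneg, div_le_one (by positivity)]; exact_mod_cast hn
  calc specNorm (dobrushinStep n C)
      ≤ (1 - 1 / n) * specNorm 1 + 1 / n * specNorm C := by
        refine (specNorm_add_le _ _).trans_eq ?_
        rw [specNorm_smul, specNorm_smul, abs_of_nonneg h1, abs_of_nonneg (by positivity)]
    _ ≤ (1 - 1 / n) * 1 + 1 / n * specNorm C := by gcongr; exact specNorm_one_le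
    _ = 1 - (1 - specNorm C) / n := by ring

lemma glauberOp_sub_glauberOp (μ ν : (Fin n → Bool) → ℝ) (g : (Fin n → Bool) → ℝ)
    (x : Fin n → Bool) : glauberOp μ g x - glauberOp ν g x
      = 1 / n * ∑ i, (condProb μ x i - condProb ν x i) * disc i g x := by
  simp only [glauberOp, disc, ← mul_sub, ← Finset.sum_sub_distrib]
  congr 1
  exact Finset.sum_congr rfl fun i _ => by ring

end Glauber

section IsingGlauber

variable {n : ℕ}

lemma abs_disc_glauberOp_ising_le {J : Matrix (Fin n) (Fin n) ℝ} (hJs : J.IsSymm)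
    (hJd : ∀ i, J i i = 0) {g : (Fin n → Bool) → ℝ} {b : Fin n → ℝ}
    (hg : ∀ x i, |disc i g x| ≤ b i) (x : Fin n → Bool) (j : Fin n) :
    |disc j (glauberOp (ising J) g) x| ≤ (dobrushinStep n (absMat J) *ᵥ b) j := by
  have hC := abs_condProb_ising_up_sub_dn_le hJs hJd
  refine (abs_disc_glauberOp_le (ising_pos J) hC hg x j).trans_eq ?_
  rw [dobrushinStep_mulVec_apply]
  congr 2
  simp only [absMat, Matrix.mulVec, dotProduct, Matrix.of_apply]
  exact Finset.sum_congr rfl fun i _ => by rw [hJs.apply i j]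

lemma abs_glauberOp_ising_sub_smul_le {L : Matrix (Fin n) (Fin n) ℝ} (hLs : L.IsSymm)
    (hLd : ∀ i, L i i = 0) {ε : ℝ} (hε : 0 < ε) {g : (Fin n → Bool) → ℝ} {b : Fin n → ℝ}
    (hg : ∀ x i, |disc i g x| ≤ b i) (x : Fin n → Bool) :
    |glauberOp (ising L) g x - glauberOp (ising ((1 + ε) • L)) g x|
      ≤ 1 / n * (ε / 2 * (specNorm L * √n) * √(∑ i, b i ^ 2)) := by
  set m := L *ᵥ sigmaVec x
  rw [glauberOp_sub_glauberOp, abs_mul, abs_of_nonneg (by positivity)]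
  gcongr
  calc |∑ i, (condProb (ising L) x i - condProb (ising ((1 + ε) • L)) x i) * disc i g x|
      ≤ ∑ i, ε / 2 * |m i| * b i := by
        refine (Finset.abs_sum_le_sum_abs _ _).trans (Finset.sum_le_sum fun i _ => ?_)
        rw [abs_mul]
        exact mul_le_mul (abs_condProb_ising_sub_smul_le hLs hLd hε x i) (hg x i)
          (abs_nonneg _) (by positivity)
    _ = ε / 2 * ∑ i, |m i| * b i := by
        rw [Finset.mul_sum]; exact Finset.sum_congr rfl fun i _ => by ring
    _ ≤ ε / 2 * (√(∑ i, m i ^ 2) * √(∑ i, b i ^ 2)) := by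
        gcongr
        simpa only [sq_abs] using Real.sum_mul_le_sqrt_mul_sqrt Finset.univ (fun i => |m i|) b
    _ ≤ ε / 2 * (specNorm L * √n * √(∑ i, b i ^ 2)) := by
        gcongr
        simpa only [sum_sigmaVec_sq] using sqrt_sum_mulVec_sq_le L (sigmaVec x)
    _ = ε / 2 * (specNorm L * √n) * √(∑ i, b i ^ 2) := by ring

lemma abs_disc_iterate_glauberOp_ising_le {L : Matrix (Fin n) (Fin n) ℝ}
    (hLs : L.IsSymm) (hLd : ∀ i, L i i = 0) {f : (Fin n → Bool) → ℝ} {a : Fin n → ℝ}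
    (hf : ∀ x y, |f x - f y| ≤ ∑ i, if x i = y i then 0 else a i) (k : ℕ) (x : Fin n → Bool)
    (i : Fin n) :
    |disc i ((glauberOp (ising L))^[k] f) x| ≤ ((dobrushinStep n (absMat L) *ᵥ ·)^[k] a) i := by
  induction k generalizing x i with
  | zero => exact abs_disc_le_of_abs_sub_le hf x i
  | succ k ih =>
    rw [Function.iterate_succ_apply', Function.iterate_succ_apply']
    exact abs_disc_glauberOp_ising_le hLs hLd ih x i

lemma abs_expect_ising_sub_smul_le (hn : 0 < n) {L : Matrix (Fin n) (Fin n) ℝ}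
    (hLs : L.IsSymm) (hLd : ∀ i, L i i = 0) {ε : ℝ} (hε : 0 < ε) {f : (Fin n → Bool) → ℝ}
    {a : Fin n → ℝ} (hf : ∀ x y, |f x - f y| ≤ ∑ i, if x i = y i then 0 else a i) (K : ℕ) :
    |expect (ising L) f - expect (ising ((1 + ε) • L)) f|
      ≤ √n * √(∑ i, a i ^ 2) * specNorm (dobrushinStep n (absMat L)) ^ K
        + 1 / n * (ε / 2 * (specNorm L * √n) * √(∑ i, a i ^ 2))
          * ∑ k ∈ Finset.range K, specNorm (dobrushinStep n (absMat L)) ^ k := by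
  set A := dobrushinStep n (absMat L)
  have hdisc := abs_disc_iterate_glauberOp_ising_le hLs hLd hf
  have hnorm := sqrt_sum_iterate_mulVec_sq_le A a
  have hkernel : ∀ k x, |glauberOp (ising L) ((glauberOp (ising L))^[k] f) x
      - glauberOp (ising ((1 + ε) • L)) ((glauberOp (ising L))^[k] f) x|
      ≤ 1 / n * (ε / 2 * (specNorm L * √n) * √(∑ i, a i ^ 2)) * specNorm A ^ k := fun k x => by
    refine (abs_glauberOp_ising_sub_smul_le hLs hLd hε (hdisc k) x).trans ?_
    have := specNorm_nonneg L
    calc _ ≤ 1 / n * (ε / 2 * (specNorm L * √n) * (specNorm A ^ k * √(∑ i, a i ^ 2))) := by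
          gcongr; exact hnorm k
      _ = _ := by ring
  refine (abs_expect_sub_expect_le_of_iterate (fun x => (ising_pos _ x).le) (sum_ising _)
    (expect_glauberOp hn (ising_pos L)) (expect_glauberOp hn (ising_pos _)) f hkernel K).trans ?_
  rw [← Finset.mul_sum]
  gcongr
  refine (abs_expect_sub_expect_le (fun x => (ising_pos L x).le) (sum_ising L)
    (fun x => (ising_pos _ x).le) (sum_ising _) (abs_sub_le_sum_of_abs_disc_le (hdisc K))).trans ?_
  calc _ ≤ √n * √(∑ i, ((A *ᵥ ·)^[K] a) i ^ 2) := sum_le_sqrt_mul_sqrt_sum_sq _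
    _ ≤ √n * (specNorm A ^ K * √(∑ i, a i ^ 2)) := by gcongr; exact hnorm K
    _ = _ := by ring

end IsingGlauber

theorem stmt7_general {n : ℕ} (L : Matrix (Fin n) (Fin n) ℝ)
    (hLsymm : L.IsSymm) (hLdiag : ∀ i, L i i = 0)
    (hDob : specNorm (absMat L) < 1)
    (ε : ℝ) (hε : 0 < ε)
    (a : Fin n → ℝ)
    (f : (Fin n → Bool) → ℝ)
    (hf : ∀ x y, |f x - f y| ≤ ∑ i, if x i = y i then 0 else a i) :
    |expect (ising L) f - expect (ising ((1 + ε) • L)) f|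
      ≤ ε * Real.sqrt (∑ i, (a i) ^ 2) * Real.sqrt n * specNorm L
          / (2 * (1 - specNorm (absMat L))) := by
  rcases Nat.eq_zero_or_pos n with rfl | hn
  · have hf0 : ∀ x y : Fin 0 → Bool, |f x - f y| ≤ 0 := fun x y => by
      simp [Subsingleton.elim x y]
    simpa using abs_expect_sub_expect_le (fun x => (ising_pos L x).le) (sum_ising L)
      (fun x => (ising_pos _ x).le) (sum_ising _) hf0
  set d := 1 / n * (ε / 2 * (specNorm L * √n) * √(∑ i, a i ^ 2))
  have hd : 0 ≤ d := by simp only [d, specNorm]; positivity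
  have hgap : 0 < (1 - specNorm (absMat L)) / n := div_pos (by linarith) (by positivity)
  have hθ : specNorm (dobrushinStep n (absMat L)) ≤ 1 - (1 - specNorm (absMat L)) / n :=
    specNorm_dobrushinStep_le hn _
  calc _ ≤ d / (1 - specNorm (dobrushinStep n (absMat L))) :=
        le_div_one_sub_of_forall_le_pow_add_geom (specNorm_nonneg _) (by linarith) hd
          (abs_expect_ising_sub_smul_le hn hLsymm hLdiag hε hf)
    _ ≤ d / ((1 - specNorm (absMat L)) / n) := by gcongr; linarith
    _ = _ := by
        have : (1 : ℝ) - specNorm (absMat L) ≠ 0 := by linarith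
        simp only [d]
        field_simp

theorem stmt7 {n : ℕ} (hn : 0 < n) (L : Matrix (Fin n) (Fin n) ℝ)
    (hLsymm : L.IsSymm) (hLdiag : ∀ i, L i i = 0)
    (hDob : specNorm (absMat L) < 1)
    (ε : ℝ) (hε : 0 < ε)
    (a : Fin n → ℝ) (ha : ∀ i, 0 < a i)
    (f : (Fin n → Bool) → ℝ)
    (hf : ∀ x y, |f x - f y| ≤ ∑ i, if x i = y i then 0 else a i) :
    |expect (ising L) f - expect (ising ((1 + ε) • L)) f|
      ≤ ε * Real.sqrt (∑ i, (a i) ^ 2) * Real.sqrt n * specNorm L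
          / (2 * (1 - specNorm (absMat L))) :=
  stmt7_general L hLsymm hLdiag hDob ε hε a f hf
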